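/- Let D be a directed acyclic graph on vertex set N and let S ⊆ N be a dissociation set of the moralized graph of D (i.e., every vertex of Mo(D) − S has degree at most one). Then at most 2|S| vertices in N \ S have a descendant in S. -/

import Mathlib

open scoped Classical

variable {V : Type*}

/-- The arc relation of an arc set. -/
def arcRel (A : Set (V × V)) : V → V → Prop := fun u v => (u, v) ∈ A

/-- `(N, A)` is a directed acyclic graph: no directed cycles. -/
def IsDAG (A : Set (V × V)) : Prop := ∀ v : V, ¬ Relation.TransGen (arcRel A) v v

/-- Parent set of `v` under arc set `A`. -/
def parents (A : Set (V × V)) (v : V) : Set V := {u | (u, v) ∈ A}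

/-- `w` is a descendant of `v`: there is a (nonempty) directed path from `v` to `w`. -/
def Descends (A : Set (V × V)) (v w : V) : Prop := Relation.TransGen (arcRel A) v w

/-- The moralized graph of `(N, A)`: edges between adjacent vertices and
between vertices with a common child. -/
def Mo (A : Set (V × V)) : SimpleGraph V where
  Adj u v := u ≠ v ∧ ((u, v) ∈ A ∨ (v, u) ∈ A ∨ ∃ w, (u, w) ∈ A ∧ (v, w) ∈ A)
  symm := by
    constructor
    intro u v h
    obtain ⟨hne, h⟩ := h
    refine ⟨hne.symm, ?_⟩
    rcases h with h | h | ⟨w, h1, h2⟩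
    · exact Or.inr (Or.inl h)
    · exact Or.inl h
    · exact Or.inr (Or.inr ⟨w, h2, h1⟩)
  loopless := ⟨fun v h => h.1 rfl⟩

/-- `S` is a dissociation set of `G`: `G − S` has maximum degree at most one. -/
def IsDissoc (G : SimpleGraph V) (S : Set V) : Prop :=
  ∀ v ∉ S, {w | w ∉ S ∧ G.Adj v w}.ncard ≤ 1

/-! A vertex `v ∉ S` with a descendant in `S` reaches `S` by one arc, or by two arcs through a
vertex outside `S`: on a path `v → u → u' → w'` with `u, u' ∉ S`, both `v` and `u'` are
neighbours of `u` in `Mo A − S`, so `v = u'` and the path shortcuts to `v → w'`. For `w ∈ S` fix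
a parent `u ∉ S` of `w`. A parent `x ∉ S` of `w` is `u` or moral-adjacent to `u` (common child
`w`); if `x → u' → w` with `u' ∉ S`, then `x` is adjacent to `u` when `u' = u`, and otherwise `x`
and `u` are both neighbours of `u'` in `Mo A − S`, so `x = u`. Hence at most two vertices reach
`w` in this way, and summing over `w ∈ S` gives `2|S|`. -/

lemma IsDAG.ne_of_mem {A : Set (V × V)} (hdag : IsDAG A) {u v : V} (h : (u, v) ∈ A) : u ≠ v := by
  rintro rfl
  exact hdag u (Relation.TransGen.single h)

lemma IsDAG.mo_adj_of_mem {A : Set (V × V)} (hdag : IsDAG A) {u v : V} (h : (u, v) ∈ A) :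
    (Mo A).Adj u v :=
  ⟨hdag.ne_of_mem h, Or.inl h⟩

lemma mo_adj_of_common_child {A : Set (V × V)} {u v w : V} (hne : u ≠ v) (hu : (u, w) ∈ A)
    (hv : (v, w) ∈ A) : (Mo A).Adj u v :=
  ⟨hne, Or.inr (Or.inr ⟨w, hu, hv⟩)⟩

lemma IsDissoc.eq_of_adj [Finite V] {G : SimpleGraph V} {S : Set V} (hS : IsDissoc G S)
    {u x y : V} (hu : u ∉ S) (hx : x ∉ S) (hy : y ∉ S) (hux : G.Adj u x) (huy : G.Adj u y) :
    x = y :=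
  (Set.ncard_le_one (Set.toFinite _)).mp (hS u hu) x ⟨hx, hux⟩ y ⟨hy, huy⟩

def nearAncestors (A : Set (V × V)) (S : Set V) (w : V) : Set V :=
  {v | v ∉ S ∧ ((v, w) ∈ A ∨ ∃ u, u ∉ S ∧ (v, u) ∈ A ∧ (u, w) ∈ A)}

lemma exists_mem_nearAncestors_of_descends [Finite V] {A : Set (V × V)} {S : Set V}
    (hdag : IsDAG A) (hS : IsDissoc (Mo A) S) {v w : V} (hvw : Descends A v w) (hv : v ∉ S)
    (hw : w ∈ S) : ∃ w' ∈ S, v ∈ nearAncestors A S w' := by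
  induction hvw using Relation.TransGen.head_induction_on with
  | single hvw => exact ⟨w, hw, hv, Or.inl hvw⟩
  | @head v u hvu _ ih =>
    by_cases hu : u ∈ S
    · exact ⟨u, hu, hv, Or.inl hvu⟩
    obtain ⟨w', hw', -, huw' | ⟨u', hu', huu', hu'w'⟩⟩ := ih hu
    · exact ⟨w', hw', hv, Or.inr ⟨u, hu, hvu, huw'⟩⟩
    · have hvu' : v = u' := hS.eq_of_adj hu hv hu'
        (hdag.mo_adj_of_mem hvu).symm (hdag.mo_adj_of_mem huu')
      exact ⟨w', hw', hv, Or.inl (hvu' ▸ hu'w')⟩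

lemma ncard_nearAncestors_le_two [Finite V] {A : Set (V × V)} {S : Set V} (hdag : IsDAG A)
    (hS : IsDissoc (Mo A) S) (w : V) : (nearAncestors A S w).ncard ≤ 2 := by
  rcases (nearAncestors A S w).eq_empty_or_nonempty with hempty | ⟨v, hv, hvw⟩
  · simp [hempty]
  obtain ⟨u, hu, huw⟩ : ∃ u, u ∉ S ∧ (u, w) ∈ A := by
    rcases hvw with hvw | ⟨u, hu, -, huw⟩
    exacts [⟨v, hv, hvw⟩, ⟨u, hu, huw⟩]
  have hsub : nearAncestors A S w ⊆ insert u {z | z ∉ S ∧ (Mo A).Adj u z} := by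
    rintro x ⟨hx, hxw | ⟨u', hu', hxu', hu'w⟩⟩
    · by_cases hxu : x = u
      · exact Or.inl hxu
      · exact Or.inr ⟨hx, mo_adj_of_common_child (Ne.symm hxu) huw hxw⟩
    · by_cases hu'u : u' = u
      · exact Or.inr ⟨hx, hu'u ▸ (hdag.mo_adj_of_mem hxu').symm⟩
      · exact Or.inl <| hS.eq_of_adj hu' hx hu (hdag.mo_adj_of_mem hxu').symm
          (mo_adj_of_common_child hu'u hu'w huw)
  calc (nearAncestors A S w).ncard ≤ (insert u {z | z ∉ S ∧ (Mo A).Adj u z}).ncard :=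
        Set.ncard_le_ncard hsub (Set.toFinite _)
    _ ≤ {z | z ∉ S ∧ (Mo A).Adj u z}.ncard + 1 := Set.ncard_insert_le _ _
    _ ≤ 2 := Nat.succ_le_succ (hS u hu)

/-- At most `2|S|` vertices outside a dissociation set `S` of the moralized graph
have a descendant in `S`. -/
theorem stmt_0 [Fintype V] (A : Set (V × V)) (S : Set V)
    (hdag : IsDAG A) (hdis : IsDissoc (Mo A) S) :
    {v | v ∉ S ∧ ∃ w ∈ S, Descends A v w}.ncard ≤ 2 * S.ncard := by
  have hcover :
      {v | v ∉ S ∧ ∃ w ∈ S, Descends A v w} ⊆ ⋃ w ∈ S.toFinset, nearAncestors A S w := by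
    rintro v ⟨hv, w, hw, hvw⟩
    obtain ⟨w', hw', hvw'⟩ := exists_mem_nearAncestors_of_descends hdag hdis hvw hv hw
    exact Set.mem_iUnion₂.mpr ⟨w', Set.mem_toFinset.mpr hw', hvw'⟩
  calc _ ≤ (⋃ w ∈ S.toFinset, nearAncestors A S w).ncard :=
        Set.ncard_le_ncard hcover (Set.toFinite _)
    _ ≤ ∑ w ∈ S.toFinset, (nearAncestors A S w).ncard := S.toFinset.set_ncard_biUnion_le _
    _ ≤ ∑ _w ∈ S.toFinset, 2 :=
        Finset.sum_le_sum fun w _ => ncard_nearAncestors_le_two hdag hdis w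
    _ = 2 * S.ncard := by
        rw [Finset.sum_const, smul_eq_mul, mul_comm, Set.ncard_eq_toFinset_card']
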